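/- Let J = (f₁,…,f_t) ⊆ I be ideals in a commutative ring R with J ∩ Iⁿ = J·Iⁿ⁻¹ for all n ≥ 1. Set J_s = (f₁,…,f_s). If (J_{t−s} : f_{t−s+1}) = J_{t−s} for every 1 ≤ s ≤ t−1, then J_i ∩ Iⁿ = J_i·Iⁿ⁻¹ for all n ≥ 1 and all 1 ≤ i ≤ t. -/

import Mathlib

/-!
Descending induction on `i`. If `x ∈ J_i ∩ I^{n+1}`, then `x ∈ J_{i+1} ∩ I^{n+1} = J_{i+1} Iⁿ`, so
`x = y + f b` with `y ∈ J_i Iⁿ`, `b ∈ Iⁿ` and `f = f_{i+1}`. Since `f b = x - y ∈ J_i` and `f` is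
regular modulo `J_i`, we get `b ∈ J_i ∩ Iⁿ = J_i Iⁿ⁻¹` by induction on `n`, whence `f b ∈ J_i Iⁿ`.
-/

namespace Ideal

variable {R : Type*} [CommRing R]

/-- `K ∩ Iⁿ = K Iⁿ⁻¹` for `n ≥ 1`, reindexed to avoid the truncated `n - 1`. -/
def IsAluffiTorsionFree (K I : Ideal R) : Prop :=
  ∀ n : ℕ, K ⊓ I ^ (n + 1) = K * I ^ n

theorem isAluffiTorsionFree_iff {K I : Ideal R} :
    K.IsAluffiTorsionFree I ↔ ∀ n : ℕ, 1 ≤ n → K ⊓ I ^ n = K * I ^ (n - 1) :=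
  ⟨fun h n hn => by simpa [Nat.sub_add_cancel hn] using h (n - 1),
    fun h n => by simpa using h (n + 1) n.succ_pos⟩

theorem IsAluffiTorsionFree.le {K I : Ideal R} (h : K.IsAluffiTorsionFree I) : K ≤ I := by
  simpa using h 0

theorem inf_span_singleton_mul_le {K L : Ideal R} {a : R} (ha : K.colon (span {a}) ≤ K) :
    K ⊓ span {a} * L ≤ span {a} * (K ⊓ L) := by
  rintro x ⟨hxK, hxL⟩
  obtain ⟨b, hbL, rfl⟩ := mem_span_singleton_mul.mp hxL
  have hbK : b ∈ K := ha (mem_colon_span_singleton.mpr (mul_comm a b ▸ hxK))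
  exact mul_mem_mul (mem_span_singleton_self a) ⟨hbK, hbL⟩

theorem IsAluffiTorsionFree.of_sup_span_singleton {K I : Ideal R} {a : R}
    (h : (K ⊔ span {a}).IsAluffiTorsionFree I) (ha : K.colon (span {a}) ≤ K) :
    K.IsAluffiTorsionFree I := by
  have hKI : K ≤ I := le_sup_left.trans h.le
  have haI : span {a} ≤ I := le_sup_right.trans h.le
  intro n
  induction n with
  | zero => simpa using hKI
  | succ n ih =>
    refine le_antisymm ?_ (le_inf mul_le_left ?_)
    · calc K ⊓ I ^ (n + 2)
            = K ⊓ ((K ⊔ span {a}) ⊓ I ^ (n + 2)) := by rw [← inf_assoc, inf_sup_self]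
          _ = K ⊓ (K * I ^ (n + 1) ⊔ span {a} * I ^ (n + 1)) := by rw [h, sup_mul]
          _ = K * I ^ (n + 1) ⊔ K ⊓ span {a} * I ^ (n + 1) := by
            rw [inf_comm, sup_inf_assoc_of_le _ mul_le_left, inf_comm]
          _ ≤ K * I ^ (n + 1) ⊔ span {a} * (K * I ^ n) :=
            sup_le_sup_left ((inf_span_singleton_mul_le ha).trans_eq (by rw [ih])) _
          _ ≤ K * I ^ (n + 1) := by
            rw [mul_left_comm, pow_succ' I n]
            exact sup_le le_rfl (mul_mono_right (mul_mono_left haI))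
    · rw [pow_succ' I (n + 1)]
      exact mul_mono_left hKI

section Truncation

variable {t : ℕ} (f : Fin t → R)

theorem span_image_fin_lt_self : span (f '' {i : Fin t | (i : ℕ) < t}) = span (Set.range f) := by
  simp

theorem span_image_fin_lt_succ {k : ℕ} (hk : k < t) :
    span (f '' {i : Fin t | (i : ℕ) < k + 1}) =
      span (f '' {i : Fin t | (i : ℕ) < k}) ⊔ span {f ⟨k, hk⟩} := by
  have hset : {i : Fin t | (i : ℕ) < k + 1} = {i : Fin t | (i : ℕ) < k} ∪ {⟨k, hk⟩} := by
    ext i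
    simp only [Set.mem_union, Set.mem_singleton_iff, Set.mem_ofPred_eq, Fin.ext_iff]
    omega
  rw [hset, Set.image_union, Set.image_singleton, span_union]

end Truncation

end Ideal

theorem strongly_aluffi_torsion_free_general {R : Type*} [CommRing R] {t : ℕ} (f : Fin t → R)
    (J I : Ideal R) (hJ : J = Ideal.span (Set.range f))
    (hatf : ∀ n : ℕ, 1 ≤ n → J ⊓ I ^ n = J * I ^ (n - 1))
    (Js : ℕ → Ideal R) (hJs : ∀ s : ℕ, Js s = Ideal.span (f '' {i : Fin t | (i : ℕ) < s}))
    (hcolon : ∀ k : Fin t, 1 ≤ (k : ℕ) →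
      Submodule.colon (Js k) (Ideal.span {f k}) = Js k) :
    ∀ i : ℕ, 1 ≤ i → i ≤ t → ∀ n : ℕ, 1 ≤ n → Js i ⊓ I ^ n = Js i * I ^ (n - 1) := by
  intro i hi hit
  rw [← Ideal.isAluffiTorsionFree_iff]
  induction hit using Nat.decreasingInduction with
  | self =>
    rw [hJs, Ideal.span_image_fin_lt_self, ← hJ]
    exact Ideal.isAluffiTorsionFree_iff.mpr hatf
  | of_succ k hk ih =>
    have hsucc := ih (by omega)
    rw [hJs, Ideal.span_image_fin_lt_succ f hk, ← hJs] at hsucc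
    exact hsucc.of_sup_span_singleton (hcolon ⟨k, hk⟩ hi).le

/-- Criterion for strongly Aluffi torsion-free: if `J = (f₁,…,f_t) ⊆ I` is Aluffi
torsion-free and `(J_{t−s} : f_{t−s+1}) = J_{t−s}` for `1 ≤ s ≤ t−1` (equivalently,
each truncation colon condition holds), then each truncation `J_i` is Aluffi torsion-free. -/
theorem strongly_aluffi_torsion_free {R : Type*} [CommRing R] {t : ℕ} (f : Fin t → R)
    (J I : Ideal R) (hJ : J = Ideal.span (Set.range f)) (hJI : J ≤ I)
    (hatf : ∀ n : ℕ, 1 ≤ n → J ⊓ I ^ n = J * I ^ (n - 1))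
    (Js : ℕ → Ideal R) (hJs : ∀ s : ℕ, Js s = Ideal.span (f '' {i : Fin t | (i : ℕ) < s}))
    (hcolon : ∀ k : Fin t, 1 ≤ (k : ℕ) →
      Submodule.colon (Js k) (Ideal.span {f k}) = Js k) :
    ∀ i : ℕ, 1 ≤ i → i ≤ t → ∀ n : ℕ, 1 ≤ n → Js i ⊓ I ^ n = Js i * I ^ (n - 1) :=
  strongly_aluffi_torsion_free_general f J I hJ hatf Js hJs hcolon
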